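/- On the path graph P_n, define the odd greedy step of a configuration D as MD where M = {(i,i+1) : i odd, D(i) > D(i+1)}, and the even greedy step as M'D where M' = {(i,i+1) : i even, D(i) > D(i+1)}. Suppose C_k is obtained from some configuration by an odd greedy step and C_{k+1} is the even greedy step of C_k (or symmetrically, C_k is obtained by an even greedy step and C_{k+1} is the odd greedy step of C_k). Then for every token t with Φ_{C_k}(t) > 0, one has Φ_{C_{k+1}}(t) ≤ Φ_{C_k}(t) − 1. -/

import Mathlib

/-- `φ⁻(t, Q)` for the prefix `Q = [1, j]`: the number of vertices `i' ≤ j` whose token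
must cross `t`, i.e. with `C(i') > t`. -/
def phiM (n : ℕ) (C : Fin n → Fin n) (t j : Fin n) : ℕ :=
  (Finset.univ.filter fun i' : Fin n => i' ≤ j ∧ t < C i').card

/-- `ψ⁻(t, Q)` for the prefix `Q = [1, j]` and position `i` of `t`: the number of vertices
`i'` with `j < i' < i` whose token need not cross `t`, i.e. with `C(i') < t`. -/
def psiM (n : ℕ) (C : Fin n → Fin n) (t i j : Fin n) : ℕ :=
  (Finset.univ.filter fun i' : Fin n => j < i' ∧ i' < i ∧ C i' < t).card

/-- The prefixes for token `t` at position `i`: endpoints `j < i` such that some vertex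
`i' ≤ j` carries a token with `C(i') > t`. -/
def prefixSet (n : ℕ) (C : Fin n → Fin n) (t i : Fin n) : Finset (Fin n) :=
  Finset.univ.filter fun j : Fin n => j < i ∧ ∃ i' ≤ j, t < C i'

/-- `Φ⁻_C(t)` (with `i` the position of `t`): the maximum of `φ⁻ + ψ⁻` over all prefixes,
or `0` if no prefix exists. -/
def PhiM (n : ℕ) (C : Fin n → Fin n) (t i : Fin n) : ℕ :=
  (prefixSet n C t i).sup fun j => phiM n C t j + psiM n C t i j

/-- `φ⁺(t, Q)` for the suffix `Q = [j, n]`. -/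
def phiP (n : ℕ) (C : Fin n → Fin n) (t j : Fin n) : ℕ :=
  (Finset.univ.filter fun i' : Fin n => j ≤ i' ∧ C i' < t).card

/-- `ψ⁺(t, Q)` for the suffix `Q = [j, n]` and position `i` of `t`. -/
def psiP (n : ℕ) (C : Fin n → Fin n) (t i j : Fin n) : ℕ :=
  (Finset.univ.filter fun i' : Fin n => i < i' ∧ i' < j ∧ t < C i').card

/-- The suffixes for token `t` at position `i`: startpoints `j > i` such that some vertex
`i' ≥ j` carries a token with `C(i') < t`. -/
def suffixSet (n : ℕ) (C : Fin n → Fin n) (t i : Fin n) : Finset (Fin n) :=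
  Finset.univ.filter fun j : Fin n => i < j ∧ ∃ i', j ≤ i' ∧ C i' < t

/-- `Φ⁺_C(t)` (with `i` the position of `t`): the maximum of `φ⁺ + ψ⁺` over all suffixes,
or `0` if no suffix exists. -/
def PhiP (n : ℕ) (C : Fin n → Fin n) (t i : Fin n) : ℕ :=
  (suffixSet n C t i).sup fun j => phiP n C t j + psiP n C t i j

/-- The potential `Φ_C(t) = Φ⁻_C(t) + Φ⁺_C(t)` of token `t` at position `i = C⁻¹(t)`. -/
def Phi (n : ℕ) (C : Fin n → Fin n) (t i : Fin n) : ℕ :=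
  PhiM n C t i + PhiP n C t i

/-- The greedy step with parity `p ∈ {0, 1}` on the path `P_n` (0-indexed): simultaneously
swap the tokens on every edge `(v, v+1)` with `v ≡ p (mod 2)` whose tokens are out of
order (`D v > D (v+1)`).  With 1-indexed vertices as in the paper, `p = 0` is the *odd*
greedy step and `p = 1` is the *even* greedy step. -/
def greedyStep (n p : ℕ) (D : Fin n → Fin n) : Fin n → Fin n := fun v =>
  if v.val % 2 = p then
    if h : v.val + 1 < n then
      if D ⟨v.val + 1, h⟩ < D v then D ⟨v.val + 1, h⟩ else D v
    else D v
  else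
    if 1 ≤ v.val then
      if D v < D ⟨v.val - 1, lt_of_le_of_lt (Nat.sub_le _ _) v.isLt⟩ then
        D ⟨v.val - 1, lt_of_le_of_lt (Nat.sub_le _ _) v.isLt⟩
      else D v
    else D v

/-!
After a greedy step of one parity no two consecutive descents remain, so the greedy step of
the other parity is routing along an involution `τ` that swaps exactly the descents. Take a
prefix of `t` after the step; we may assume it ends at a token larger than `t`. If that token
was already there before the step, the prefix one vertex longer is a prefix before the step
with at least one more large token; otherwise the token came from the left, and the prefix
one vertex shorter is a prefix before the step with one more small token between it and `t`.
So `Φ⁻` drops by one, unless it is `0` afterwards, or `t` moved right, passing a small token,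
in which case that token gives `Φ⁺ > 0` before the step. Reversing the path and the order of
the tokens exchanges `Φ⁻` and `Φ⁺`, which gives the mirror statement, and the two combine.
-/

open Finset Function

variable {n : ℕ}

lemma card_filter_congr_of_involutive {α : Type*} [Fintype α] {τ : α → α} (hτ : Involutive τ)
    {P Q : α → Prop} [DecidablePred P] [DecidablePred Q] (h : ∀ x, P (τ x) ↔ Q x) :
    #{x | P x} = #{x | Q x} := by
  refine card_nbij' τ τ (fun x hx => ?_) (fun x hx => ?_) (fun x _ => hτ x) (fun x _ => hτ x)
  · simpa [← h, hτ x] using hx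
  · simpa [h] using hx

section Counting

variable {C : Fin n → Fin n} {t i j k : Fin n}

lemma exists_le_of_mem_prefixSet (hj : j ∈ prefixSet n C t i) :
    ∃ k ≤ j, t < C k ∧ phiM n C t j + psiM n C t i j ≤ phiM n C t k + psiM n C t i k := by
  have hne : ({x | x ≤ j ∧ t < C x} : Finset (Fin n)).Nonempty := by
    obtain ⟨-, x, hxj, hx⟩ := (mem_filter.mp hj).2
    exact ⟨x, by simp [hxj, hx]⟩
  have hmax := max'_mem _ hne
  simp only [mem_filter, mem_univ, true_and] at hmax
  obtain ⟨hkj, hk⟩ := hmax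
  refine ⟨_, hkj, hk, add_le_add (le_of_eq ?_) (card_le_card fun x hx => ?_)⟩
  · unfold phiM
    congr 1
    ext x
    simp only [mem_filter, mem_univ, true_and]
    exact ⟨fun h => ⟨le_max' _ x (by simpa using h), h.2⟩, fun h => ⟨h.1.trans hkj, h.2⟩⟩
  · simp only [mem_filter, mem_univ, true_and] at hx ⊢
    exact ⟨lt_of_le_of_lt hkj hx.1, hx.2⟩

lemma psiM_eq_of_not_lt (hk : (k : ℕ) = j + 1) (h : ¬ C k < t) :
    psiM n C t i j = psiM n C t i k := by
  unfold psiM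
  congr 1
  ext x
  simp only [mem_filter, mem_univ, true_and, Fin.lt_def]
  refine ⟨fun ⟨hjx, hxi, hx⟩ => ⟨?_, hxi, hx⟩, fun ⟨hkx, hxi, hx⟩ => ⟨by omega, hxi, hx⟩⟩
  have : x ≠ k := by rintro rfl; exact h hx
  have := Fin.val_ne_of_ne this
  omega

lemma psiM_eq_add_one (hk : (k : ℕ) + 1 = j) (hji : j < i) (h : C j < t) :
    psiM n C t i k = psiM n C t i j + 1 := by
  unfold psiM
  rw [← card_insert_of_notMem (a := j) (by simp)]
  congr 1
  ext x
  simp only [mem_insert, mem_filter, mem_univ, true_and, Fin.lt_def]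
  constructor
  · rintro ⟨hkx, hxi, hx⟩
    rcases eq_or_ne x j with rfl | hxj
    · exact .inl rfl
    · exact .inr ⟨by have := Fin.val_ne_of_ne hxj; omega, hxi, hx⟩
  · rintro (rfl | ⟨hjx, hxi, hx⟩)
    · exact ⟨by omega, hji, h⟩
    · exact ⟨by omega, hxi, hx⟩

lemma PhiP_eq_PhiM_rev (C : Fin n → Fin n) (t i : Fin n) :
    PhiP n C t i = PhiM n (Fin.rev ∘ C ∘ Fin.rev) t.rev i.rev := by
  have hset : prefixSet n (Fin.rev ∘ C ∘ Fin.rev) t.rev i.rev =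
      (suffixSet n C t i).map Fin.revPerm.toEmbedding := by
    ext x
    rw [mem_map_equiv]
    simp only [prefixSet, suffixSet, mem_filter, mem_univ, true_and, comp_apply,
      Fin.revPerm_symm, Fin.revPerm_apply, Fin.rev_lt_rev, Fin.lt_rev_iff]
    refine and_congr_right fun _ => ⟨fun ⟨y, hy, hCy⟩ => ⟨y.rev, ?_, hCy⟩,
      fun ⟨y, hy, hCy⟩ => ⟨y.rev, ?_, by rwa [Fin.rev_rev]⟩⟩
    · rwa [Fin.rev_le_rev]
    · rwa [Fin.rev_le_iff]
  rw [PhiP, PhiM, hset, sup_map]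
  refine sup_congr rfl fun j _ => ?_
  simp only [phiP, psiP, phiM, psiM]
  congr 1 <;> refine card_filter_congr_of_involutive Fin.rev_involutive fun x => ?_ <;>
    simp only [Equiv.coe_toEmbedding, Fin.revPerm_apply, comp_apply, Fin.rev_rev,
      Fin.rev_lt_rev, Fin.rev_lt_iff]
  · rw [Fin.le_rev_iff]
  · rw [Fin.lt_rev_iff]
    exact and_left_comm

end Counting

/-- A matching of `P_n` is encoded as an involution `τ` moving every vertex by at most one,
so that routing `C` along it gives `C ∘ τ`; here it swaps exactly the descents of `C`. -/
structure IsDescentMatching (C τ : Fin n → Fin n) : Prop where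
  involutive : Involutive τ
  val_le_succ : ∀ v, (τ v : ℕ) ≤ v + 1
  lt_of_lt : ∀ v, v < τ v → C (τ v) < C v
  eq_of_lt : ∀ v w : Fin n, (w : ℕ) = v + 1 → C w < C v → τ v = w

namespace IsDescentMatching

variable {C τ : Fin n → Fin n} {t i j k : Fin n}

lemma le_val_add_one (hτ : IsDescentMatching C τ) (v : Fin n) : (v : ℕ) ≤ τ v + 1 := by
  simpa only [hτ.involutive v] using hτ.val_le_succ (τ v)

lemma lt_of_gt (hτ : IsDescentMatching C τ) {v : Fin n} (h : τ v < v) : C v < C (τ v) := by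
  simpa only [hτ.involutive v] using hτ.lt_of_lt (τ v) (by rwa [hτ.involutive v])

lemma rev (hτ : IsDescentMatching C τ) :
    IsDescentMatching (Fin.rev ∘ C ∘ Fin.rev) (Fin.rev ∘ τ ∘ Fin.rev) where
  involutive v := by simp [hτ.involutive _]
  val_le_succ v := by
    have := hτ.le_val_add_one v.rev
    simp only [comp_apply, Fin.val_rev] at this ⊢
    omega
  lt_of_lt v h := by
    simp only [comp_apply, Fin.rev_lt_rev, Fin.rev_rev] at h ⊢
    exact hτ.lt_of_gt (Fin.rev_lt_rev.mp (by rwa [Fin.rev_rev]))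
  eq_of_lt v w hw h := by
    simp only [comp_apply, Fin.rev_lt_rev] at h ⊢
    rw [← hτ.eq_of_lt w.rev v.rev (by simp only [Fin.val_rev]; omega) h, hτ.involutive,
      Fin.rev_rev]

lemma phiM_comp (hτ : IsDescentMatching C τ) :
    phiM n (C ∘ τ) t j = #{y | τ y ≤ j ∧ t < C y} :=
  (card_filter_congr_of_involutive hτ.involutive fun x => by simp [hτ.involutive x]).symm

lemma psiM_comp (hτ : IsDescentMatching C τ) :
    psiM n (C ∘ τ) t (τ i) j = #{y | j < τ y ∧ τ y < τ i ∧ C y < t} :=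
  (card_filter_congr_of_involutive hτ.involutive fun x => by simp [hτ.involutive x]).symm

lemma phiM_comp_add_one_le (hτ : IsDescentMatching C τ) (hk : (k : ℕ) = j + 1)
    (hj : t < C j) (hk' : t < C k) : phiM n (C ∘ τ) t j + 1 ≤ phiM n C t k := by
  rw [hτ.phiM_comp, phiM]
  refine card_lt_card ((Finset.ssubset_iff_of_subset fun y hy => ?_).mpr ?_)
  · simp only [mem_filter, mem_univ, true_and, Fin.le_def] at hy ⊢
    have := hτ.le_val_add_one y
    exact ⟨by omega, hy.2⟩
  · by_cases hjk : τ j = k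
    · refine ⟨j, ?_, ?_⟩ <;> simp only [mem_filter, mem_univ, true_and, Fin.le_def, hjk, not_and]
      · exact ⟨by omega, hj⟩
      · omega
    · refine ⟨k, ?_, ?_⟩
      · simp only [mem_filter, mem_univ, true_and]
        exact ⟨le_rfl, hk'⟩
      simp only [mem_filter, mem_univ, true_and, Fin.le_def, not_and]
      intro hkj
      have : τ k ≠ j := fun h => hjk (by rw [← h, hτ.involutive])
      have := Fin.val_ne_of_ne this
      have := hτ.le_val_add_one k
      omega

lemma phiM_comp_le (hτ : IsDescentMatching C τ) (hj : (τ j : ℕ) + 1 = j) (hCj : ¬ t < C j) :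
    phiM n (C ∘ τ) t j ≤ phiM n C t (τ j) := by
  rw [hτ.phiM_comp, phiM]
  refine card_le_card fun y hy => ?_
  simp only [mem_filter, mem_univ, true_and] at hy ⊢
  refine ⟨?_, hy.2⟩
  rcases eq_or_ne (τ y) j with hyj | hyj
  · rw [← hyj, hτ.involutive]
  · have : y ≠ j := by rintro rfl; exact hCj hy.2
    have := Fin.val_ne_of_ne this
    have := Fin.val_ne_of_ne hyj
    have := hτ.le_val_add_one y
    have := Fin.le_def.mp hy.1
    rw [Fin.le_def]
    omega

/-- The extra `1`: if `t` moves right, the small token it passes ends up to its left. -/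
lemma psiM_comp_le (hτ : IsDescentMatching C τ) (hi : C i = t) (hj : t < C (τ j)) :
    psiM n (C ∘ τ) t (τ i) j ≤ psiM n C t i j + if i < τ i then 1 else 0 := by
  have hmem : ∀ y, j < τ y → τ y < τ i → C y < t → y ≠ τ i → j < y ∧ y < i ∧ C y < t := by
    intro y hjy hyi hy hyτi
    have hyj : y ≠ j := by
      rintro rfl
      exact lt_asymm hj (hy.trans' (hτ.lt_of_lt y hjy))
    have hyi' : y ≠ i := by rintro rfl; exact hy.ne hi
    have := Fin.val_ne_of_ne hyj
    have := Fin.val_ne_of_ne hyi'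
    have := Fin.val_ne_of_ne hyτi
    have := hτ.le_val_add_one y
    have := hτ.val_le_succ y
    have := hτ.val_le_succ i
    simp only [Fin.lt_def] at hjy hyi ⊢
    exact ⟨by omega, by omega, hy⟩
  rw [hτ.psiM_comp, psiM]
  split_ifs with hiτ
  · refine (card_le_card fun y hy => ?_).trans (card_insert_le (τ i) _)
    simp only [mem_insert, mem_filter, mem_univ, true_and] at hy ⊢
    rcases eq_or_ne y (τ i) with rfl | hyτi
    · exact .inl rfl
    · exact .inr (hmem y hy.1 hy.2.1 hy.2.2 hyτi)
  · refine (card_le_card fun y hy => ?_).trans_eq (add_zero _).symm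
    simp only [mem_filter, mem_univ, true_and] at hy ⊢
    refine hmem y hy.1 hy.2.1 hy.2.2 ?_
    rintro rfl
    exact hiτ (by simpa [hτ.involutive i] using hy.2.1)

lemma exists_mem_prefixSet_of_lt (hC : Injective C) (hτ : IsDescentMatching C τ)
    (hi : C i = t) (hj : j < τ i) (hbig : t < C (τ j)) :
    ∃ k ∈ prefixSet n C t i, phiM n (C ∘ τ) t j + psiM n (C ∘ τ) t (τ i) j + 1 ≤
      phiM n C t k + psiM n C t i k + if i < τ i then 1 else 0 := by
  have hψ := hτ.psiM_comp_le hi hbig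
  have hji : j ≠ i := by
    rintro rfl
    exact lt_asymm hbig (hi ▸ hτ.lt_of_lt j hj)
  have hτi := hτ.val_le_succ i
  have hji' : (j : ℕ) < i := by
    have := Fin.val_ne_of_ne hji
    have := Fin.lt_def.mp hj
    omega
  rcases lt_or_gt_of_ne (fun h => hji (hC (h.trans hi.symm)) : C j ≠ t) with hsmall | hjbig
  · have hτj : (τ j : ℕ) + 1 = j := by
      have hne : τ j ≠ j := fun h => lt_asymm hsmall (h ▸ hbig)
      have hlt : ¬ j < τ j := fun h => lt_asymm hsmall (hbig.trans (hτ.lt_of_lt j h))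
      have := Fin.val_ne_of_ne hne
      have := hτ.le_val_add_one j
      rw [Fin.lt_def] at hlt
      omega
    refine ⟨τ j, ?_, ?_⟩
    · simp only [prefixSet, mem_filter, mem_univ, true_and, Fin.lt_def]
      exact ⟨by omega, τ j, le_rfl, hbig⟩
    · have := hτ.phiM_comp_le hτj hsmall.not_gt
      have := psiM_eq_add_one (C := C) hτj (Fin.lt_def.mpr hji') hsmall
      omega
  · set k : Fin n := ⟨j + 1, by have := i.isLt; omega⟩
    have hkbig : t < C k := by
      by_cases hdesc : C k < C j
      · rwa [← hτ.eq_of_lt j k rfl hdesc]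
      · exact hjbig.trans_le (not_lt.mp hdesc)
    have hki : (k : ℕ) < i := by
      have : k ≠ i := fun h => hkbig.ne' (h ▸ hi)
      have := Fin.val_ne_of_ne this
      simp only [k] at this ⊢
      omega
    refine ⟨k, ?_, ?_⟩
    · simp only [prefixSet, mem_filter, mem_univ, true_and, Fin.lt_def]
      exact ⟨hki, k, le_rfl, hkbig⟩
    · have := hτ.phiM_comp_add_one_le rfl hjbig hkbig
      have := psiM_eq_of_not_lt (C := C) (i := i) (rfl : (k : ℕ) = j + 1) hkbig.not_gt
      omega

lemma PhiM_comp (hC : Injective C) (hτ : IsDescentMatching C τ) (hi : C i = t) :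
    PhiM n (C ∘ τ) t (τ i) = 0 ∨
      PhiM n (C ∘ τ) t (τ i) + 1 ≤ PhiM n C t i + if i < τ i then 1 else 0 := by
  rcases (prefixSet n (C ∘ τ) t (τ i)).eq_empty_or_nonempty with hempty | hne
  · simp [PhiM, hempty]
  right
  obtain ⟨j, hj, hsup⟩ := exists_mem_eq_sup _ hne
    fun j => phiM n (C ∘ τ) t j + psiM n (C ∘ τ) t (τ i) j
  obtain ⟨j', hj'j, hbig, hle⟩ := exists_le_of_mem_prefixSet hj
  obtain ⟨k, hk, hlt⟩ := hτ.exists_mem_prefixSet_of_lt hC hi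
    (lt_of_le_of_lt hj'j (mem_filter.mp hj).2.1) hbig
  have := le_sup (f := fun j => phiM n C t j + psiM n C t i j) hk
  unfold PhiM
  rw [hsup]
  omega

lemma PhiM_pos (hτ : IsDescentMatching C τ) (hi : C i = t) (h : τ i < i) :
    0 < PhiM n C t i := by
  have hbig : t < C (τ i) := hi ▸ hτ.lt_of_gt h
  have hmem : τ i ∈ prefixSet n C t i := by
    simp only [prefixSet, mem_filter, mem_univ, true_and]
    exact ⟨h, τ i, le_rfl, hbig⟩
  have hφ : 0 < phiM n C t (τ i) := card_pos.mpr ⟨τ i, by simp [hbig]⟩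
  exact hφ.trans_le ((Nat.le_add_right _ _).trans
    (le_sup (f := fun j => phiM n C t j + psiM n C t i j) hmem))

lemma PhiP_comp (hC : Injective C) (hτ : IsDescentMatching C τ) (hi : C i = t) :
    PhiP n (C ∘ τ) t (τ i) = 0 ∨
      PhiP n (C ∘ τ) t (τ i) + 1 ≤ PhiP n C t i + if τ i < i then 1 else 0 := by
  have hrev := hτ.rev.PhiM_comp (Fin.rev_injective.comp (hC.comp Fin.rev_injective))
    (i := i.rev) (t := t.rev) (by simp [hi])
  simpa [PhiP_eq_PhiM_rev, comp_def] using hrev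

lemma PhiP_pos (hτ : IsDescentMatching C τ) (hi : C i = t) (h : i < τ i) :
    0 < PhiP n C t i := by
  rw [PhiP_eq_PhiM_rev]
  exact hτ.rev.PhiM_pos (by simp [hi]) (by simpa using h)

theorem Phi_comp_add_one_le (hC : Injective C) (hτ : IsDescentMatching C τ) (hi : C i = t)
    (hpos : 0 < Phi n C t i) : Phi n (C ∘ τ) t (τ i) + 1 ≤ Phi n C t i := by
  have hM := hτ.PhiM_comp hC hi
  have hP := hτ.PhiP_comp hC hi
  unfold Phi at hpos ⊢
  rcases lt_trichotomy i (τ i) with h | h | h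
  · have := hτ.PhiP_pos hi h
    simp only [h, if_true, lt_asymm h, if_false] at hM hP
    omega
  · simp only [← h, lt_irrefl, if_false] at hM hP ⊢
    omega
  · have := hτ.PhiM_pos hi h
    simp only [h, if_true, lt_asymm h, if_false] at hM hP
    omega

end IsDescentMatching

def greedyMatch (n q : ℕ) (B : Fin n → Fin n) : Fin n → Fin n := fun v =>
  if v.val % 2 = q then
    if h : v.val + 1 < n then
      if B ⟨v.val + 1, h⟩ < B v then ⟨v.val + 1, h⟩ else v
    else v
  else
    if 1 ≤ v.val then
      if B v < B ⟨v.val - 1, lt_of_le_of_lt (Nat.sub_le _ _) v.isLt⟩ then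
        ⟨v.val - 1, lt_of_le_of_lt (Nat.sub_le _ _) v.isLt⟩
      else v
    else v

section GreedyStep

variable {q : ℕ} {B : Fin n → Fin n}

lemma greedyStep_eq_comp : greedyStep n q B = B ∘ greedyMatch n q B := by
  funext v
  rw [comp_apply]
  unfold greedyStep greedyMatch
  split_ifs <;> rfl

lemma greedyMatch_of_succ {v w : Fin n} (hw : (w : ℕ) = v + 1) (hv : (v : ℕ) % 2 = q) :
    greedyMatch n q B v = (if B w < B v then w else v) ∧
      greedyMatch n q B w = (if B w < B v then v else w) := by
  obtain ⟨w, hwn⟩ := w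
  subst hw
  constructor
  · simp [greedyMatch, hv, hwn]
  · have : ¬ ((v : ℕ) + 1) % 2 = q := by omega
    simp [greedyMatch, this]

lemma greedyMatch_cases (v : Fin n) :
    greedyMatch n q B v = v ∨
      ((greedyMatch n q B v : ℕ) = v + 1 ∧ (v : ℕ) % 2 = q ∧ B (greedyMatch n q B v) < B v) ∨
      ((v : ℕ) = greedyMatch n q B v + 1 ∧ (v : ℕ) % 2 ≠ q ∧ B v < B (greedyMatch n q B v)) := by
  unfold greedyMatch
  split_ifs with h1 h2 h3 h4 h5
  all_goals first
    | exact .inl rfl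
    | exact .inr (.inl ⟨rfl, h1, h3⟩)
    | exact .inr (.inr ⟨by simp; omega, h1, h5⟩)

lemma greedyMatch_involutive (hq : q < 2) : Involutive (greedyMatch n q B) := by
  intro v
  rcases greedyMatch_cases (B := B) v with hfix | ⟨hw, hv, hlt⟩ | ⟨hv, hvq, hlt⟩
  · rw [hfix, hfix]
  · rw [(greedyMatch_of_succ hw hv).2, if_pos hlt]
  · rw [(greedyMatch_of_succ hv (by omega)).1, if_pos hlt]

lemma isDescentMatching_greedyMatch (hq : q < 2)
    (hB : ∀ v w : Fin n, (w : ℕ) = v + 1 → (v : ℕ) % 2 ≠ q → B v < B w) :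
    IsDescentMatching B (greedyMatch n q B) where
  involutive := greedyMatch_involutive hq
  val_le_succ v := by
    rcases greedyMatch_cases (B := B) v with hfix | ⟨hw, -⟩ | ⟨hv, -⟩
    · rw [hfix]; omega
    · omega
    · omega
  lt_of_lt v h := by
    rcases greedyMatch_cases (B := B) v with hfix | ⟨-, -, hlt⟩ | ⟨hv, -⟩
    · exact absurd h (by rw [hfix]; exact lt_irrefl v)
    · exact hlt
    · exact absurd (Fin.lt_def.mp h) (by omega)
  eq_of_lt v w hw h := by
    have hv : (v : ℕ) % 2 = q := by
      by_contra hv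
      exact lt_asymm h (hB v w hw hv)
    rw [(greedyMatch_of_succ hw hv).1, if_pos h]

lemma greedyStep_lt_of_succ {D : Fin n → Fin n} (hD : Injective D) {v w : Fin n}
    (hw : (w : ℕ) = v + 1) (hv : (v : ℕ) % 2 = q) : greedyStep n q D v < greedyStep n q D w := by
  obtain ⟨hvw, hwv⟩ := greedyMatch_of_succ (B := D) hw hv
  rw [greedyStep_eq_comp, comp_apply, comp_apply, hvw, hwv]
  split_ifs with h
  · exact h
  · exact (not_lt.mp h).lt_of_ne (hD.ne (Fin.ne_of_val_ne (by omega)))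

end GreedyStep

/-- suppose `C_k` is obtained from some configuration by a greedy step of
parity `p` (odd step for `p = 0`, even step for `p = 1`) and `C_{k+1}` is the greedy step
of the opposite parity `1 - p` applied to `C_k`.  Then for every token `t` with
`Φ_{C_k}(t) > 0` one has `Φ_{C_{k+1}}(t) ≤ Φ_{C_k}(t) - 1`.  (Here `i_k` and `i_{k+1}`
are the positions of `t` in `C_k` and `C_{k+1}`.) -/
theorem stmt_12 (n p : ℕ) (hp : p < 2) (D : Fin n ≃ Fin n)
    (Ck Ck1 : Fin n → Fin n)
    (hCk : Ck = greedyStep n p ⇑D) (hCk1 : Ck1 = greedyStep n (1 - p) Ck)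
    (t ik ik1 : Fin n) (hik : Ck ik = t) (hik1 : Ck1 ik1 = t)
    (hpos : 0 < Phi n Ck t ik) :
    Phi n Ck1 t ik1 + 1 ≤ Phi n Ck t ik := by
  have hCk_inj : Injective Ck := by
    rw [hCk, greedyStep_eq_comp]
    exact D.injective.comp (greedyMatch_involutive hp).injective
  have hτ : IsDescentMatching Ck (greedyMatch n (1 - p) Ck) :=
    isDescentMatching_greedyMatch (by omega) fun v w hw hv =>
      hCk ▸ greedyStep_lt_of_succ D.injective hw (by omega)
  rw [greedyStep_eq_comp] at hCk1
  have hik1' : ik1 = greedyMatch n (1 - p) Ck ik := by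
    rw [← hτ.involutive ik1, hτ.involutive.injective.eq_iff]
    exact hCk_inj (by rw [← comp_apply (f := Ck), ← hCk1, hik1, hik])
  subst hCk1 hik1'
  exact hτ.Phi_comp_add_one_le hCk_inj hik hpos
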